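/- Every infix of length at least 3 of any finite word built by concatenating copies of x₁ and x₂ has a strictly positive energy level in at least one of the two components, where x₁ = (+,0)(+,−) and x₂ = (0,+)(−,+). -/

import Mathlib

/-- The alphabet `I = {0, +, -}`. -/
inductive I : Type
  | zero | plus | minus
deriving DecidableEq, Inhabited

/-- Value of a single letter. -/
def lv : I → ℤ
  | I.zero => 0
  | I.plus => 1
  | I.minus => -1

/-- Energy level of a finite word. -/
def EL (v : List I) : ℤ := (v.map lv).sum

/-- The prefix `w(0) ⋯ w(n-1)` of an infinite word, of length `n`. -/
def prefixWord (w : ℕ → I) (n : ℕ) : List I := (List.range n).map w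

/-- `w` is safe if every nonempty prefix has nonnegative energy level. -/
def Safe (w : ℕ → I) : Prop := ∀ n : ℕ, 0 ≤ EL (prefixWord w (n + 1))

/-- `w` has a safe suffix. -/
def HasSafeSuffix (w : ℕ → I) : Prop := ∃ n : ℕ, Safe (fun k => w (n + k))

/-- The word `x₁ = (+,0)(+,-)`. -/
def x1 : List (I × I) := [(I.plus, I.zero), (I.plus, I.minus)]

/-- The word `x₂ = (0,+)(-,+)`. -/
def x2 : List (I × I) := [(I.zero, I.plus), (I.minus, I.plus)]

/-!
Weigh a letter `(a, b)` by `lv a + lv b`; the weight of a word is then the sum of the energy levels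
of its two projections. Both `x₁` and `x₂` have weight word `1 0`, so a word in `{x₁, x₂}*` has
weight word `(1 0)ᵏ`. Any two adjacent weights there add up to at least `1` and all weights are
nonnegative, so every infix of length at least `2` has total weight at least `1`, and one of the
two projections has positive energy level.
-/

open List

def letterWeight (p : I × I) : ℤ := lv p.1 + lv p.2

lemma EL_map_fst_add_EL_map_snd (u : List (I × I)) :
    EL (u.map Prod.fst) + EL (u.map Prod.snd) = (u.map letterWeight).sum := by
  simp only [EL, map_map]
  exact sum_map_add.symm

lemma map_letterWeight_flatten {l : List (List (I × I))} (hl : ∀ v ∈ l, v = x1 ∨ v = x2) :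
    l.flatten.map letterWeight = (replicate l.length [1, 0]).flatten := by
  induction l with
  | nil => rfl
  | cons v l ih =>
    have hv : v.map letterWeight = [1, 0] := by
      rcases hl v mem_cons_self with h | h <;> rw [h] <;> rfl
    rw [flatten_cons, map_append, hv, ih fun w hw => hl w (mem_cons_of_mem v hw)]
    rfl

lemma isChain_flatten_replicate_one_zero (k : ℕ) :
    IsChain (fun a b : ℤ => 1 ≤ a + b) (replicate k [1, 0]).flatten := by
  induction k with
  | zero => exact .nil
  | succ k ih =>
    rw [replicate_succ, flatten_cons, cons_append, cons_append, nil_append,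
      isChain_cons_cons]
    refine ⟨le_refl _, ?_⟩
    cases k with
    | zero => exact .singleton 0
    | succ k =>
      rw [replicate_succ, flatten_cons, cons_append] at ih ⊢
      exact isChain_cons_cons.mpr ⟨le_refl _, ih⟩

lemma nonneg_of_mem_flatten_replicate_one_zero {k : ℕ} {x : ℤ}
    (hx : x ∈ (replicate k [1, 0]).flatten) : 0 ≤ x := by
  simp only [mem_flatten, mem_replicate] at hx
  obtain ⟨_, ⟨_, rfl⟩, hmem⟩ := hx
  simp only [mem_cons, not_mem_nil, or_false] at hmem
  omega

lemma one_le_sum_of_isChain {u : List ℤ} (hchain : IsChain (fun a b => 1 ≤ a + b) u)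
    (hnonneg : ∀ x ∈ u, 0 ≤ x) (hlen : 2 ≤ u.length) : 1 ≤ u.sum := by
  match u, hchain with
  | a :: b :: rest, hchain =>
    have hab : 1 ≤ a + b := (isChain_cons_cons.mp hchain).1
    have hrest : 0 ≤ rest.sum :=
      sum_nonneg fun x hx => hnonneg x (mem_cons_of_mem _ (mem_cons_of_mem _ hx))
    simp only [sum_cons]
    omega

theorem infix_of_x_words_positive_energy (l : List (List (I × I)))
    (hl : ∀ v ∈ l, v = x1 ∨ v = x2) (u : List (I × I))
    (hinf : u <:+: l.flatten) (hlen : 3 ≤ u.length) :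
    0 < EL (u.map Prod.fst) ∨ 0 < EL (u.map Prod.snd) := by
  have hweights : u.map letterWeight <:+: (replicate l.length [1, 0]).flatten :=
    map_letterWeight_flatten hl ▸ hinf.map letterWeight
  have hsum : 1 ≤ (u.map letterWeight).sum :=
    one_le_sum_of_isChain ((isChain_flatten_replicate_one_zero _).infix hweights)
      (fun _ hx => nonneg_of_mem_flatten_replicate_one_zero (hweights.subset hx))
      (by rw [length_map]; omega)
  rw [← EL_map_fst_add_EL_map_snd] at hsum
  omega
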